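/- arXiv:1807.09401 — 9 statements merged into one kernel-verified Lean document; each statement's English description precedes it below -/
import Mathlib

section
/- Let z be a real number with 0 < |z| < π. Then (sin z)/z · (1/(1 - (2/3)sin²(z/2))) - 1 < 0, i.e. the function (sin z)/z is strictly smaller than 1 - (2/3)sin²(z/2) in absolute-value-wise sense on (0,π); equivalently sin z · (1 - (2/3)sin²(z/2))^{-1} < z for 0 < z < π. -/
/-!
Since `1 - (2/3) sin²(z/2) = (2 + cos z)/3` and `sin z / z` is even, the claim is the classical
inequality `3 sin z < z (2 + cos z)` on `(0, π)`. The difference `z (2 + cos z) - 3 sin z` vanishes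
at `0` and has derivative `2 - 2 cos z - z sin z = 4 sin(z/2) (sin(z/2) - (z/2) cos(z/2))`, which is
positive on `(0, π)` because `t < tan t` on `(0, π/2)`.
-/

open Set

namespace Real

lemma cos_eq_one_sub_two_mul_sin_half_sq (x : ℝ) : cos x = 1 - 2 * sin (x / 2) ^ 2 := by
  rw [← cos_two_mul_eq_one_sub, mul_div_cancel₀ x two_ne_zero]

lemma mul_cos_lt_sin {x : ℝ} (h0 : 0 < x) (hx : x < π / 2) : x * cos x < sin x := by
  have hcos : 0 < cos x := cos_pos_of_mem_Ioo ⟨by linarith [pi_pos], hx⟩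
  simpa [tan_eq_sin_div_cos, lt_div_iff₀ hcos] using lt_tan h0 hx

lemma two_sub_two_mul_cos_sub_mul_sin_pos {x : ℝ} (h0 : 0 < x) (hx : x < π) :
    0 < 2 - 2 * cos x - x * sin x := by
  have hsin : 0 < sin (x / 2) := sin_pos_of_pos_of_lt_pi (by linarith) (by linarith [pi_pos])
  have hlt : x / 2 * cos (x / 2) < sin (x / 2) := mul_cos_lt_sin (by linarith) (by linarith)
  have hsin2 : sin x = 2 * sin (x / 2) * cos (x / 2) := by
    rw [← sin_two_mul, mul_div_cancel₀ x two_ne_zero]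
  calc (0 : ℝ) < 4 * sin (x / 2) * (sin (x / 2) - x / 2 * cos (x / 2)) := by
        have := sub_pos.2 hlt
        positivity
    _ = 2 - 2 * cos x - x * sin x := by rw [cos_eq_one_sub_two_mul_sin_half_sq x, hsin2]; ring

lemma hasDerivAt_mul_two_add_cos_sub_three_mul_sin (x : ℝ) :
    HasDerivAt (fun y => y * (2 + cos y) - 3 * sin y) (2 - 2 * cos x - x * sin x) x := by
  refine (((hasDerivAt_id' x).mul ((hasDerivAt_cos x).const_add 2)).sub
    ((hasDerivAt_sin x).const_mul 3)).congr_deriv ?_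
  ring

lemma three_mul_sin_lt_mul_two_add_cos {x : ℝ} (h0 : 0 < x) (hx : x < π) :
    3 * sin x < x * (2 + cos x) := by
  have hmono : StrictMonoOn (fun y => y * (2 + cos y) - 3 * sin y) (Icc 0 π) := by
    refine strictMonoOn_of_deriv_pos (convex_Icc 0 π) (by fun_prop) fun y hy => ?_
    rw [interior_Icc] at hy
    rw [(hasDerivAt_mul_two_add_cos_sub_three_mul_sin y).deriv]
    exact two_sub_two_mul_cos_sub_mul_sin_pos hy.1 hy.2
  have := hmono (left_mem_Icc.2 pi_pos.le) ⟨h0.le, hx.le⟩ h0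
  simp only [zero_mul, sin_zero, mul_zero, sub_zero] at this
  linarith

lemma sin_div_lt_two_add_cos_div_three {x : ℝ} (hx : |x| < π) :
    sin x / x < (2 + cos x) / 3 := by
  have hpos : ∀ {y : ℝ}, 0 < y → y < π → sin y / y < (2 + cos y) / 3 := fun hy hyπ => by
    rw [div_lt_div_iff₀ hy three_pos]
    linarith [three_mul_sin_lt_mul_two_add_cos hy hyπ]
  rcases lt_trichotomy x 0 with hneg | rfl | hx0
  · rw [← neg_div_neg_eq, ← sin_neg, ← cos_neg]
    exact hpos (neg_pos.2 hneg) (by rwa [abs_of_neg hneg] at hx)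
  · norm_num
  · exact hpos hx0 (by rwa [abs_of_pos hx0] at hx)

end Real

theorem stmt_0_general (z : ℝ) (hpi : |z| < Real.pi) :
    Real.sin z / z * (1 / (1 - (2/3) * Real.sin (z/2) ^ 2)) - 1 < 0 := by
  have hpos : 0 < (2 + Real.cos z) / 3 := by linarith [Real.neg_one_le_cos z]
  have hdenom : 1 - (2/3) * Real.sin (z/2) ^ 2 = (2 + Real.cos z) / 3 := by
    linarith [Real.cos_eq_one_sub_two_mul_sin_half_sq z]
  rw [hdenom, sub_neg, mul_one_div, div_lt_one hpos]
  exact Real.sin_div_lt_two_add_cos_div_three hpi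

theorem stmt_0 (z : ℝ) (h0 : 0 < |z|) (hpi : |z| < Real.pi) :
    Real.sin z / z * (1 / (1 - (2/3) * Real.sin (z/2) ^ 2)) - 1 < 0 :=
  stmt_0_general z hpi
end

section
/- For every real z with 0 < |z| < π, the inequality (4/z²)sin²(z/2) + (4/(3z²))sin⁴(z/2) - 1 < 0 holds. -/
/-!
With `w = z / 2` the claim reads `sin² w + sin⁴ w / 3 < w²` for `0 < |w| < π / 2`. The difference
`g w = w² - sin² w - sin⁴ w / 3` satisfies `g 0 = g' 0 = 0` and `g'' w = 16 / 3 * sin⁴ w`, which is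
positive on `(0, π)`; so `g' > 0` and then `g > 0` on `(0, π)`, and `g` is even.
-/

open Real Set

theorem lt_of_hasDerivAt_of_pos {f f' : ℝ → ℝ} {a b : ℝ} (hab : a < b)
    (hf : ∀ x ∈ Icc a b, HasDerivAt f (f' x) x) (hf' : ∀ x ∈ Ioo a b, 0 < f' x) :
    f a < f b := by
  have hmono : StrictMonoOn f (Icc a b) :=
    strictMonoOn_of_hasDerivWithinAt_pos (convex_Icc a b)
      (fun x hx => (hf x hx).continuousAt.continuousWithinAt)
      (fun x hx => (hf x (interior_subset hx)).hasDerivWithinAt)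
      (fun x hx => hf' x (by rwa [interior_Icc] at hx))
  exact hmono (left_mem_Icc.2 hab.le) (right_mem_Icc.2 hab.le) hab

theorem sin_sq_add_sin_pow_four_div_three_lt_sq {w : ℝ} (hw0 : 0 < w) (hwπ : w < π) :
    sin w ^ 2 + sin w ^ 4 / 3 < w ^ 2 := by
  set g' : ℝ → ℝ := fun x => 2 * x - 2 * sin x * cos x - 4 / 3 * sin x ^ 3 * cos x
  have hg : ∀ x, HasDerivAt (fun x => x ^ 2 - sin x ^ 2 - sin x ^ 4 / 3) (g' x) x := fun x => by
    refine (((hasDerivAt_pow 2 x).sub ((hasDerivAt_sin x).fun_pow 2)).sub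
      (((hasDerivAt_sin x).fun_pow 4).div_const 3)).congr_deriv ?_
    push_cast
    ring
  have hg' : ∀ x, HasDerivAt g' (16 / 3 * sin x ^ 4) x := fun x => by
    refine ((((hasDerivAt_id x).const_mul 2).sub (((hasDerivAt_sin x).const_mul 2).mul
      (hasDerivAt_cos x))).sub ((((hasDerivAt_sin x).fun_pow 3).const_mul (4 / 3)).mul
      (hasDerivAt_cos x))).congr_deriv ?_
    push_cast
    linear_combination (-2 - 4 * sin x ^ 2) * Real.sin_sq_add_cos_sq x
  have hg'_pos : ∀ x ∈ Ioo 0 w, 0 < g' x := fun x hx => by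
    have hmono := lt_of_hasDerivAt_of_pos hx.1 (fun y _ => hg' y) fun y hy => by
      have := sin_pos_of_pos_of_lt_pi hy.1 (hy.2.trans (hx.2.trans hwπ))
      positivity
    simpa [g'] using hmono
  have := lt_of_hasDerivAt_of_pos hw0 (fun x _ => hg x) hg'_pos
  norm_num at this
  linarith

theorem stmt_1 (z : ℝ) (h0 : 0 < |z|) (hpi : |z| < Real.pi) :
    4 / z ^ 2 * Real.sin (z/2) ^ 2 + 4 / (3 * z ^ 2) * Real.sin (z/2) ^ 4 - 1 < 0 := by
  have hz : z ≠ 0 := abs_pos.1 h0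
  have key : sin (z / 2) ^ 2 + sin (z / 2) ^ 4 / 3 < (z / 2) ^ 2 := by
    rcases lt_or_gt_of_ne hz with hneg | hpos
    · have := sin_sq_add_sin_pow_four_div_three_lt_sq (w := -(z / 2)) (by linarith)
        (by rw [abs_of_neg hneg] at hpi; linarith)
      simpa [sin_neg, Even.neg_pow (by decide : Even 4)] using this
    · exact sin_sq_add_sin_pow_four_div_three_lt_sq (by linarith)
        (by rw [abs_of_pos hpos] at hpi; linarith)
  have hrw : 4 / z ^ 2 * sin (z / 2) ^ 2 + 4 / (3 * z ^ 2) * sin (z / 2) ^ 4 - 1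
      = 4 * (sin (z / 2) ^ 2 + sin (z / 2) ^ 4 / 3 - (z / 2) ^ 2) / z ^ 2 := by
    field_simp
    ring
  rw [hrw]
  exact div_neg_of_neg_of_pos (by linarith) (by positivity)
end

section
/- For every real z with 0 < |z| < π, the inequality (sin z)/z + ((sin z)/(3z))·sin²(z/2) - 1 < 0 holds. -/
lemma aux_pos (z : ℝ) (hz : 0 < z) (hpi : z < Real.pi) :
    Real.sin z / z + Real.sin z / (3 * z) * Real.sin (z/2) ^ 2 - 1 < 0 := by
  have hx : 0 < z / 2 := by linarith
  have hs : Real.sin (z/2) < z/2 := Real.sin_lt hx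
  have hs0 : 0 < Real.sin (z/2) :=
    Real.sin_pos_of_pos_of_lt_pi hx (by linarith [Real.pi_pos])
  have hc0 : 0 < Real.cos (z/2) :=
    Real.cos_pos_of_mem_Ioo ⟨by linarith [Real.pi_pos], by linarith⟩
  have hc1 : Real.cos (z/2) ≤ 1 := Real.cos_le_one _
  have hsz : Real.sin z = 2 * Real.sin (z/2) * Real.cos (z/2) := by
    rw [← Real.sin_two_mul]; ring_nf
  have hpyth : Real.sin (z/2) ^ 2 + Real.cos (z/2) ^ 2 = 1 := Real.sin_sq_add_cos_sq _
  have h1 : Real.cos (z/2) * (4 - Real.cos (z/2) ^ 2) ≤ 3 := by nlinarith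
  have key : 3 * Real.sin z + Real.sin z * Real.sin (z/2) ^ 2 < 3 * z := by
    rw [hsz]; nlinarith [mul_pos hs0 hc0, mul_nonneg hs0.le (sub_nonneg.2 h1)]
  have h3z : (0:ℝ) < 3 * z := by linarith
  have heq : Real.sin z / z + Real.sin z / (3 * z) * Real.sin (z/2) ^ 2
      = (3 * Real.sin z + Real.sin z * Real.sin (z/2) ^ 2) / (3 * z) := by
    field_simp
  rw [heq]
  have := (div_lt_one h3z).mpr key
  linarith

theorem stmt_2 (z : ℝ) (h0 : 0 < |z|) (hpi : |z| < Real.pi) :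
    Real.sin z / z + Real.sin z / (3 * z) * Real.sin (z/2) ^ 2 - 1 < 0 := by
  rcases lt_trichotomy z 0 with hz | hz | hz
  · have := aux_pos (-z) (by linarith) (by rwa [abs_of_neg hz] at hpi)
    have e1 : Real.sin (-z) / (-z) = Real.sin z / z := by
      rw [Real.sin_neg, neg_div_neg_eq]
    have e2 : Real.sin (-z) / (3 * -z) = Real.sin z / (3 * z) := by
      rw [Real.sin_neg]; ring_nf
    have e3 : Real.sin (-z/2) ^ 2 = Real.sin (z/2) ^ 2 := by
      rw [neg_div, Real.sin_neg, neg_pow, pow_succ, pow_succ]; ring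
    rw [e1, e2, e3] at this
    exact this
  · simp [hz] at h0
  · exact aux_pos z hz (by rwa [abs_of_pos hz] at hpi)
end

section
/- Let κ > 0, λ real, p ≠ 0 real, n ≥ 1 an integer, and h > 0. Define ω̄ = -κp² - iλp and, for each m ≥ 0, ω_m = -∑_{j=0}^{m} (2^{j+2}κ/(3^j h²)) sin^{2j+2}(ph/2) - i ∑_{j=0}^{m} (2^j λ/(3^j h)) sin(ph) sin^{2j}(ph/2). Then with z = ph, |ω_{n+1} - ω̄|² - |ω_n - ω̄|² = (2^{n+1} κ² p⁴ / 3^{n+1}) sin^{2n+2}(z/2) · f_n(z), where f_n(z) = (4 sin²(z/2)/z²)·( (8 sin²(z/2)/z²)·(1 - ((2/3)sin²(z/2))^{n+2})/(1 - (2/3)sin²(z/2)) - 2 - (2^{n+3}/(3^{n+1} z²)) sin^{2n+4}(z/2) ) + (λ/κ)²·(sin z/(p² z))·( 2(sin z/z)·(1 - ((2/3)sin²(z/2))^{n+2})/(1 - (2/3)sin²(z/2)) - 2 - (2^{n+1} sin z/(3^{n+1} z)) sin^{2n+2}(z/2) ). -/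
open Finset in
/-- Fourier symbol of the `m`-th corrected mass-lumped Galerkin scheme for
`u_t + λ u_x - κ u_xx = 0` on a uniform mesh of size `h`, at wave number `p`. -/
noncomputable def omegaCorr (kappa lam p h : ℝ) (m : ℕ) : ℂ :=
  -((∑ j ∈ range (m+1),
      (2:ℝ)^(j+2) * kappa / (3^j * h^2) * Real.sin (p*h/2) ^ (2*j+2) : ℝ) : ℂ)
  - Complex.I * ((∑ j ∈ range (m+1),
      (2:ℝ)^j * lam / (3^j * h) * Real.sin (p*h) * Real.sin (p*h/2) ^ (2*j) : ℝ) : ℂ)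

/-- Exact Fourier symbol `-κ p² - i λ p`. -/
noncomputable def omegaExact (kappa lam p : ℝ) : ℂ :=
  -((kappa * p^2 : ℝ) : ℂ) - Complex.I * ((lam * p : ℝ) : ℂ)

/-- The function `f_n(z)` of Lemma 1. -/
noncomputable def fLem1 (kappa lam p : ℝ) (n : ℕ) (z : ℝ) : ℝ :=
  4 * Real.sin (z/2)^2 / z^2 *
    (8 * Real.sin (z/2)^2 / z^2 *
        ((1 - ((2/3) * Real.sin (z/2)^2)^(n+2)) / (1 - (2/3) * Real.sin (z/2)^2))
      - 2 - 2^(n+3) / (3^(n+1) * z^2) * Real.sin (z/2)^(2*n+4))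
  + (lam/kappa)^2 * (Real.sin z / (p^2 * z)) *
    (2 * (Real.sin z / z) *
        ((1 - ((2/3) * Real.sin (z/2)^2)^(n+2)) / (1 - (2/3) * Real.sin (z/2)^2))
      - 2 - 2^(n+1) * Real.sin z / (3^(n+1) * z) * Real.sin (z/2)^(2*n+2))

/-! Both parts of `ω_m` are multiples of one geometric partial sum
`G_m = ∑_{j ≤ m} r^j` with `r = (2/3) sin²(ph/2)`:
`ω_m = -(4κ sin²(ph/2)/h²) G_m - i (λ sin(ph)/h) G_m`. So `|ω_m - ω̄|²` is a sum of two squares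
that are quadratic in `G_m`; going from `n` to `n+1` adds `r^(n+1)` to `G_n`, and writing
`G_(n+1) = (1 - r^(n+2))/(1 - r)` turns the difference of squares into `f_n(ph)`. -/

open Finset Complex

noncomputable def lumpedGeomSum (z : ℝ) (m : ℕ) : ℝ :=
  ∑ j ∈ range (m+1), (2/3 * Real.sin (z/2)^2)^j

lemma lumpedGeomSum_succ (z : ℝ) (m : ℕ) :
    lumpedGeomSum z (m+1)
      = lumpedGeomSum z m + 2^(m+1) / 3^(m+1) * Real.sin (z/2)^(2*m+2) := by
  rw [lumpedGeomSum, lumpedGeomSum, sum_range_succ, mul_pow, div_pow, ← pow_mul]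
  ring

lemma lumpedGeomSum_eq (z : ℝ) (m : ℕ) :
    lumpedGeomSum z m
      = (1 - (2/3 * Real.sin (z/2)^2)^(m+1)) / (1 - 2/3 * Real.sin (z/2)^2) := by
  have hr : 2/3 * Real.sin (z/2)^2 ≠ 1 := by nlinarith [Real.sin_sq_le_one (z/2)]
  simpa [lumpedGeomSum] using geom_sum_Ico' hr (Nat.zero_le (m+1))

lemma omegaCorr_eq (kappa lam p h : ℝ) (m : ℕ) :
    omegaCorr kappa lam p h m
      = -((4 * kappa * Real.sin (p*h/2)^2 / h^2 * lumpedGeomSum (p*h) m : ℝ) : ℂ)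
        - I * ((lam * Real.sin (p*h) / h * lumpedGeomSum (p*h) m : ℝ) : ℂ) := by
  simp only [omegaCorr, lumpedGeomSum, mul_sum]
  congr 3 <;> exact sum_congr rfl fun j _ => by rw [mul_pow, div_pow]; ring

lemma sq_norm_sub_neg_sub_I_mul (A B C D : ℝ) :
    ‖(-(A:ℂ) - I * B) - (-(C:ℂ) - I * D)‖^2 = (C - A)^2 + (D - B)^2 := by
  rw [Complex.sq_norm, ← normSq_add_mul_I]
  congr 1
  push_cast
  ring

theorem stmt_3_general (kappa lam p h : ℝ) (n : ℕ) (hkappa : 0 < kappa) (hp : p ≠ 0)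
    (hh : 0 < h) :
    ‖omegaCorr kappa lam p h (n+1) - omegaExact kappa lam p‖ ^ 2
      - ‖omegaCorr kappa lam p h n - omegaExact kappa lam p‖ ^ 2
    = 2^(n+1) * kappa^2 * p^4 / 3^(n+1) * Real.sin (p*h/2) ^ (2*n+2)
        * fLem1 kappa lam p n (p*h) := by
  have hz : p * h ≠ 0 := mul_ne_zero hp hh.ne'
  rw [omegaCorr_eq, omegaCorr_eq, omegaExact, sq_norm_sub_neg_sub_I_mul,
    sq_norm_sub_neg_sub_I_mul, fLem1, ← lumpedGeomSum_eq, lumpedGeomSum_succ]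
  field_simp
  ring

theorem stmt_3 (kappa lam p h : ℝ) (n : ℕ) (hkappa : 0 < kappa) (hp : p ≠ 0)
    (hn : 1 ≤ n) (hh : 0 < h) :
    ‖omegaCorr kappa lam p h (n+1) - omegaExact kappa lam p‖ ^ 2
      - ‖omegaCorr kappa lam p h n - omegaExact kappa lam p‖ ^ 2
    = 2^(n+1) * kappa^2 * p^4 / 3^(n+1) * Real.sin (p*h/2) ^ (2*n+2)
        * fLem1 kappa lam p n (p*h) :=
  stmt_3_general kappa lam p h n hkappa hp hh
end

section
/- For every real μ with 156μ² ≠ 17, the number z₀ = sqrt(6(98μ² + 91 - sqrt(10661 - 4004μ² + 9604μ⁴))/(156μ² - 17)) is well-defined, real, positive, and strictly less than π. -/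
/-! Rationalizing the numerator gives
`z₀² = 6 (a - √D) / (156μ² - 17) = 840 / (a + √D)` with `a = 98μ² + 91`, since
`a² - D = 140 (156μ² - 17)`. The right-hand side is positive, and as `a ≥ 91` and `D ≥ 101²`
it is at most `840 / 192 < 9 < π²`. -/

open Real

lemma sq_le_quartic_discriminant (mu : ℝ) :
    (101 : ℝ) ^ 2 ≤ 10661 - 4004 * mu ^ 2 + 9604 * mu ^ 4 := by
  nlinarith [sq_nonneg (9604 * mu ^ 2 - 2002)]

lemma le_sqrt_quartic_discriminant (mu : ℝ) : 101 ≤ √(10661 - 4004 * mu ^ 2 + 9604 * mu ^ 4) :=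
  le_sqrt_of_sq_le (sq_le_quartic_discriminant mu)

lemma smallest_root_sq_eq (mu : ℝ) (hmu : 156 * mu ^ 2 ≠ 17) :
    6 * (98 * mu ^ 2 + 91 - √(10661 - 4004 * mu ^ 2 + 9604 * mu ^ 4)) / (156 * mu ^ 2 - 17)
      = 840 / (98 * mu ^ 2 + 91 + √(10661 - 4004 * mu ^ 2 + 9604 * mu ^ 4)) := by
  have hS2 := sq_sqrt ((sq_nonneg 101).trans (sq_le_quartic_discriminant mu))
  rw [div_eq_div_iff (sub_ne_zero_of_ne hmu) (by positivity)]
  linear_combination (-6 : ℝ) * hS2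

lemma rationalized_root_sq_lt_nine (mu : ℝ) :
    840 / (98 * mu ^ 2 + 91 + √(10661 - 4004 * mu ^ 2 + 9604 * mu ^ 4)) < 9 := by
  have hS := le_sqrt_quartic_discriminant mu
  rw [div_lt_iff₀ (by positivity)]
  nlinarith [sq_nonneg mu]

theorem stmt_7 (mu : ℝ) (hmu : 156 * mu^2 ≠ 17) :
    0 ≤ 10661 - 4004*mu^2 + 9604*mu^4
    ∧ 0 ≤ 6 * (98*mu^2 + 91 - Real.sqrt (10661 - 4004*mu^2 + 9604*mu^4))
          / (156*mu^2 - 17)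
    ∧ 0 < Real.sqrt (6 * (98*mu^2 + 91
          - Real.sqrt (10661 - 4004*mu^2 + 9604*mu^4)) / (156*mu^2 - 17))
    ∧ Real.sqrt (6 * (98*mu^2 + 91
          - Real.sqrt (10661 - 4004*mu^2 + 9604*mu^4)) / (156*mu^2 - 17))
        < Real.pi := by
  rw [smallest_root_sq_eq mu hmu]
  have hpos : 0 < 840 / (98 * mu ^ 2 + 91 + √(10661 - 4004 * mu ^ 2 + 9604 * mu ^ 4)) := by
    positivity
  have hlt : 840 / (98 * mu ^ 2 + 91 + √(10661 - 4004 * mu ^ 2 + 9604 * mu ^ 4)) < π ^ 2 :=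
    (rationalized_root_sq_lt_nine mu).trans (by nlinarith [pi_gt_three])
  exact ⟨(sq_nonneg 101).trans (sq_le_quartic_discriminant mu), hpos.le, sqrt_pos.2 hpos,
    (sqrt_lt' pi_pos).2 hlt⟩
end

section
/- Let κ ≥ 0, λ real with κ + |λ| > 0, p ≠ 0, h > 0 with |ph| < π, z = ph, and n ≥ 1. With A_m = (2^{m+2}κ/(3^m h²)) sin^{2m+2}(z/2) and B_m = (2^m λ/(3^m h)) sin z sin^{2m}(z/2), define ω_n = -∑_{m=0}^{n}(A_m + iB_m) and ω_G = -∑_{m=0}^{∞}(A_m + iB_m) (the series converges since (2/3)sin²(z/2) < 1). Then |ω_G - ω_{n+1}| < |ω_G - ω_n|. -/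
/-!
The `m`-th correction term is `C q^m` with `C = 4κ sin²(z/2)/h² + iλ sin z / h` and
`q = (2/3) sin²(z/2) ∈ (0, 1)`, so `-ω_n` are the partial sums of a geometric series with sum
`-ω_G`, and `|ω_G - ω_n| = |C| q^(n+1) / |1 - q|` strictly decreases in `n` because `C ≠ 0`.
-/

section Geometric

open Finset

variable {K : Type*} [NormedField K] {r : K}

theorem tsum_sub_sum_range_geometric (hr : ‖r‖ < 1) (c : K) (k : ℕ) :
    ∑' j, c * r ^ j - ∑ j ∈ range k, c * r ^ j = c * r ^ k / (1 - r) := by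
  have hr1 : r ≠ 1 := by rintro rfl; simp at hr
  have h1r : 1 - r ≠ 0 := sub_ne_zero.mpr hr1.symm
  rw [tsum_mul_left, ← mul_sum, tsum_geometric_of_norm_lt_one hr, geom_sum_eq hr1]
  field_simp
  ring

theorem norm_tsum_sub_sum_range_geometric_succ_lt {c : K} (hc : c ≠ 0) (hr0 : r ≠ 0)
    (hr : ‖r‖ < 1) (k : ℕ) :
    ‖∑' j, c * r ^ j - ∑ j ∈ range (k + 1), c * r ^ j‖
      < ‖∑' j, c * r ^ j - ∑ j ∈ range k, c * r ^ j‖ := by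
  have h1r : 0 < ‖1 - r‖ := norm_pos_iff.mpr (sub_ne_zero.mpr (by rintro rfl; simp at hr))
  simp only [tsum_sub_sum_range_geometric hr, norm_div, norm_mul, norm_pow, pow_succ]
  gcongr
  exact mul_lt_of_lt_one_right (by positivity) hr

end Geometric

theorem Real.sin_ne_zero_of_ne_zero_of_abs_lt_pi {x : ℝ} (hx0 : x ≠ 0) (hx : |x| < Real.pi) :
    Real.sin x ≠ 0 := by
  obtain ⟨h₁, h₂⟩ := abs_lt.mp hx
  exact fun h => hx0 ((Real.sin_eq_zero_iff_of_lt_of_lt h₁ h₂).mp h)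

theorem Real.sin_half_ne_zero_of_ne_zero_of_abs_lt_pi {x : ℝ} (hx0 : x ≠ 0)
    (hx : |x| < Real.pi) : Real.sin (x / 2) ≠ 0 :=
  Real.sin_ne_zero_of_ne_zero_of_abs_lt_pi (by simpa using hx0)
    (by rw [abs_div, abs_two]; linarith [Real.pi_pos])

theorem symbol_term_eq_geometric (kappa lam h z : ℝ) (j : ℕ) :
    ((2^(j+2) * kappa / (3^j * h^2) * Real.sin (z/2)^(2*j+2) : ℝ) : ℂ)
      + Complex.I * ((2^j * lam / (3^j * h) * Real.sin z * Real.sin (z/2)^(2*j) : ℝ) : ℂ)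
    = ((4 * kappa * Real.sin (z/2)^2 / h^2 : ℝ) + Complex.I * (lam * Real.sin z / h : ℝ))
      * ((2 * Real.sin (z/2)^2 / 3 : ℝ) : ℂ) ^ j := by
  push_cast
  rw [div_pow, mul_pow, ← pow_mul]
  ring

theorem symbol_coeff_ne_zero {kappa lam h z : ℝ} (hkappa : 0 ≤ kappa) (hpos : 0 < kappa + |lam|)
    (hh : h ≠ 0) (hz0 : z ≠ 0) (hz : |z| < Real.pi) :
    ((4 * kappa * Real.sin (z/2)^2 / h^2 : ℝ) : ℂ) + Complex.I * (lam * Real.sin z / h : ℝ) ≠ 0 := by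
  intro hC
  have hre : 4 * kappa * Real.sin (z/2)^2 / h^2 = 0 := by
    simpa only [Complex.add_re, Complex.ofReal_re, Complex.I_mul_re, Complex.ofReal_im, neg_zero,
      add_zero, Complex.zero_re] using congrArg Complex.re hC
  have him : lam * Real.sin z / h = 0 := by
    simpa only [Complex.add_im, Complex.ofReal_im, Complex.I_mul_im, Complex.ofReal_re, zero_add,
      Complex.zero_im] using congrArg Complex.im hC
  rcases hkappa.eq_or_lt with rfl | hkappa
  · have hlam : lam ≠ 0 := by simpa using hpos
    exact div_ne_zero (mul_ne_zero hlam (Real.sin_ne_zero_of_ne_zero_of_abs_lt_pi hz0 hz)) hh him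
  · have hs := Real.sin_half_ne_zero_of_ne_zero_of_abs_lt_pi hz0 hz
    exact absurd hre (by positivity)

open Finset in
theorem stmt_11_general (kappa lam p h : ℝ) (hkappa : 0 ≤ kappa) (hpos : 0 < kappa + |lam|)
    (hp : p ≠ 0) (hh : 0 < h) (hz : |p*h| < Real.pi) (n : ℕ) :
    let z := p * h
    let A : ℕ → ℝ := fun m => 2^(m+2) * kappa / (3^m * h^2) * Real.sin (z/2)^(2*m+2)
    let B : ℕ → ℝ := fun m => 2^m * lam / (3^m * h) * Real.sin z * Real.sin (z/2)^(2*m)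
    let omega : ℕ → ℂ := fun m => -(∑ j ∈ range (m+1), ((A j : ℂ) + Complex.I * (B j : ℂ)))
    let omegaG : ℂ := -(∑' j : ℕ, ((A j : ℂ) + Complex.I * (B j : ℂ)))
    ‖omegaG - omega (n+1)‖ < ‖omegaG - omega n‖ := by
  intro z A B omega omegaG
  have hz0 : z ≠ 0 := mul_ne_zero hp hh.ne'
  have hs := Real.sin_half_ne_zero_of_ne_zero_of_abs_lt_pi hz0 hz
  set C : ℂ := ((4 * kappa * Real.sin (z/2)^2 / h^2 : ℝ) : ℂ) + Complex.I * (lam * Real.sin z / h : ℝ)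
  set q : ℂ := ((2 * Real.sin (z/2)^2 / 3 : ℝ) : ℂ)
  have hC : C ≠ 0 := symbol_coeff_ne_zero hkappa hpos hh.ne' hz0 hz
  have hq0 : q ≠ 0 := Complex.ofReal_ne_zero.mpr (by positivity)
  have hq1 : ‖q‖ < 1 := by
    rw [Complex.norm_real, Real.norm_of_nonneg (by positivity)]
    nlinarith [Real.sin_sq_le_one (z/2)]
  have htail : ∀ m, omegaG - omega m = -(∑' j, C * q ^ j - ∑ j ∈ range (m + 1), C * q ^ j) := by
    intro m
    have hterm (j : ℕ) : (A j : ℂ) + Complex.I * (B j : ℂ) = C * q ^ j :=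
      symbol_term_eq_geometric kappa lam h z j
    simp only [omegaG, omega, hterm]
    ring
  rw [htail, htail, norm_neg, norm_neg]
  exact norm_tsum_sub_sum_range_geometric_succ_lt hC hq0 hq1 _

open Finset in
theorem stmt_11 (kappa lam p h : ℝ) (hkappa : 0 ≤ kappa) (hpos : 0 < kappa + |lam|)
    (hp : p ≠ 0) (hh : 0 < h) (hz : |p*h| < Real.pi) (n : ℕ) (hn : 1 ≤ n) :
    let z := p * h
    let A : ℕ → ℝ := fun m => 2^(m+2) * kappa / (3^m * h^2) * Real.sin (z/2)^(2*m+2)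
    let B : ℕ → ℝ := fun m => 2^m * lam / (3^m * h) * Real.sin z * Real.sin (z/2)^(2*m)
    let omega : ℕ → ℂ := fun m => -(∑ j ∈ range (m+1), ((A j : ℂ) + Complex.I * (B j : ℂ)))
    let omegaG : ℂ := -(∑' j : ℕ, ((A j : ℂ) + Complex.I * (B j : ℂ)))
    ‖omegaG - omega (n+1)‖ < ‖omegaG - omega n‖ :=
  stmt_11_general kappa lam p h hkappa hpos hp hh hz n
end

section
/- Let κ ≥ 0, λ real, p real, n ≥ 0 a fixed integer, and for h > 0 define ω_n(h) = -∑_{m=0}^{n} ((2^{m+2}κ/(3^m h²)) sin^{2m+2}(ph/2) + i(2^m λ/(3^m h)) sin(ph) sin^{2m}(ph/2)) and ω̄ = -κp² - iλp. Then lim_{h→0⁺} ω_n(h) = ω̄. -/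
/-!
Since `sin (c h) / h → c`, the `m`-th summand behaves like `(2/3)^m (κ p² + i λ p) sin^{2m}(p h / 2)`;
the `m = 0` term is therefore consistent with the exact symbol and every correction vanishes as `h → 0`.
-/

open Filter Finset Real Topology

lemma sin_mul_div_eq_mul_sinc (c : ℝ) {h : ℝ} (hh : h ≠ 0) : sin (c * h) / h = c * sinc (c * h) := by
  rcases eq_or_ne c 0 with rfl | hc
  · simp
  · rw [sinc_of_ne_zero (mul_ne_zero hc hh)]
    field_simp

lemma tendsto_sin_mul_div_nhdsNE (c : ℝ) :
    Tendsto (fun h : ℝ => sin (c * h) / h) (𝓝[≠] 0) (𝓝 c) := by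
  have hcont : Continuous fun h : ℝ => c * sinc (c * h) := by fun_prop
  refine ((hcont.tendsto' 0 c (by simp)).mono_left nhdsWithin_le_nhds).congr' ?_
  filter_upwards [self_mem_nhdsWithin] with h hh
  exact (sin_mul_div_eq_mul_sinc c hh).symm

lemma tendsto_sin_mul_div_two_pow_nhdsNE (p : ℝ) (k : ℕ) :
    Tendsto (fun h : ℝ => sin (p * h / 2) ^ k) (𝓝[≠] 0) (𝓝 (0 ^ k)) := by
  have hcont : Continuous fun h : ℝ => sin (p * h / 2) ^ k := by fun_prop
  exact (hcont.tendsto' 0 _ (by simp)).mono_left nhdsWithin_le_nhds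

lemma tendsto_diffusion_symbol_nhdsNE (kappa p : ℝ) (m : ℕ) :
    Tendsto (fun h : ℝ => (2:ℝ)^(m+2) * kappa / (3^m * h^2) * sin (p*h/2)^(2*m+2))
      (𝓝[≠] 0) (𝓝 (kappa * p^2 * 0^m)) := by
  have hlim := (tendsto_const_nhds (x := (2:ℝ)^(m+2) * kappa / 3^m)).mul
    (((tendsto_sin_mul_div_nhdsNE (p/2)).pow 2).mul (tendsto_sin_mul_div_two_pow_nhdsNE p (2*m)))
  have hval : (2:ℝ)^(m+2) * kappa / 3^m * ((p/2)^2 * 0^(2*m)) = kappa * p^2 * 0^m := by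
    rcases m with _ | m
    · simp
      ring
    · simp
  rw [hval] at hlim
  refine hlim.congr' ?_
  filter_upwards [self_mem_nhdsWithin] with h hh
  field_simp
  ring

lemma tendsto_advection_symbol_nhdsNE (lam p : ℝ) (m : ℕ) :
    Tendsto (fun h : ℝ => (2:ℝ)^m * lam / (3^m * h) * sin (p*h) * sin (p*h/2)^(2*m))
      (𝓝[≠] 0) (𝓝 (lam * p * 0^m)) := by
  have hlim := (tendsto_const_nhds (x := (2:ℝ)^m * lam / 3^m)).mul
    ((tendsto_sin_mul_div_nhdsNE p).mul (tendsto_sin_mul_div_two_pow_nhdsNE p (2*m)))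
  have hval : (2:ℝ)^m * lam / 3^m * (p * 0^(2*m)) = lam * p * 0^m := by
    rcases m with _ | m <;> simp
  rw [hval] at hlim
  refine hlim.congr' ?_
  filter_upwards [self_mem_nhdsWithin] with h hh
  field_simp

theorem stmt_14_general (kappa lam p : ℝ) (n : ℕ) :
    Filter.Tendsto
      (fun h : ℝ => -(∑ m ∈ range (n+1),
        ((((2:ℝ)^(m+2) * kappa / (3^m * h^2) * Real.sin (p*h/2)^(2*m+2) : ℝ) : ℂ) +
          Complex.I * (((2:ℝ)^m * lam / (3^m * h) * Real.sin (p*h)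
            * Real.sin (p*h/2)^(2*m) : ℝ) : ℂ))))
      (nhdsWithin 0 (Set.Ioi 0))
      (nhds (-((kappa * p^2 : ℝ) : ℂ) - Complex.I * ((lam * p : ℝ) : ℂ))) := by
  have hterm (m : ℕ) : Tendsto
      (fun h : ℝ => ((((2:ℝ)^(m+2) * kappa / (3^m * h^2) * sin (p*h/2)^(2*m+2) : ℝ) : ℂ) +
        Complex.I * (((2:ℝ)^m * lam / (3^m * h) * sin (p*h) * sin (p*h/2)^(2*m) : ℝ) : ℂ)))
      (𝓝[≠] 0) (𝓝 (((kappa * p^2 * 0^m : ℝ) : ℂ) + Complex.I * ((lam * p * 0^m : ℝ) : ℂ))) :=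
    ((Complex.continuous_ofReal.tendsto _).comp (tendsto_diffusion_symbol_nhdsNE kappa p m)).add
      (tendsto_const_nhds.mul
        ((Complex.continuous_ofReal.tendsto _).comp (tendsto_advection_symbol_nhdsNE lam p m)))
  convert ((tendsto_finsetSum _ fun m _ => hterm m).neg).mono_left (nhdsGT_le_nhdsNE 0) using 2
  simp [Finset.sum_range_succ']
  ring

open Finset in
theorem stmt_14 (kappa lam p : ℝ) (hkappa : 0 ≤ kappa) (n : ℕ) :
    Filter.Tendsto
      (fun h : ℝ => -(∑ m ∈ range (n+1),
        ((((2:ℝ)^(m+2) * kappa / (3^m * h^2) * Real.sin (p*h/2)^(2*m+2) : ℝ) : ℂ) +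
          Complex.I * (((2:ℝ)^m * lam / (3^m * h) * Real.sin (p*h)
            * Real.sin (p*h/2)^(2*m) : ℝ) : ℂ))))
      (nhdsWithin 0 (Set.Ioi 0))
      (nhds (-((kappa * p^2 : ℝ) : ℂ) - Complex.I * ((lam * p : ℝ) : ℂ))) :=
  stmt_14_general kappa lam p n
end

section
/- Let κ = 0, λ ≠ 0, p ≠ 0, and set ω̄ = -iλp, ω_1(h) = -i(λ/h) sin(ph)(1 + (2/3)sin²(ph/2)), ω_2(h) = -i(λ/h) sin(ph)(1 + (2/3)sin²(ph/2) + (4/9)sin⁴(ph/2)). Then lim_{h→0⁺} (|ω_2(h) - ω̄|² - |ω_1(h) - ω̄|²)/h^{8} = -λ² p^{10} · 7/6480. -/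
/-!
Write `a₁ h`, `a₂ h` for the real amplitudes of `ω₁(h)`, `ω₂(h)`, so that the quantity is
`(a₂ - λp)² - (a₁ - λp)² = D (D + 2 (a₁ - λp))` with `D = a₂ - a₁ = (4λ/9) sin(ph)/h · sin⁴(ph/2)`.
Here `D / h⁴ → λp⁵/36`, and since `sin x (1 + (2/3) sin²(x/2)) = (4/3) sin x - (1/6) sin 2x`, whose
Taylor expansion is `x - x⁵/30 + O(x⁷)`, also `(a₁ - λp) / h⁴ → -λp⁵/30`. Hence the quotient by `h⁸`
tends to `λ²p¹⁰ (1/36) (1/36 - 1/15) = -7λ²p¹⁰/6480`.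
-/

open Finset in
theorem Complex.sin_bound_pow_seven {x : ℂ} (hx : ‖x‖ ≤ 1) :
    ‖Complex.sin x - (x - x ^ 3 / 6 + x ^ 5 / 120)‖ ≤ ‖x‖ ^ 7 / 4410 :=
  calc
    ‖Complex.sin x - (x - x ^ 3 / 6 + x ^ 5 / 120)‖ =
        ‖(exp (-x * I) - ∑ m ∈ range 7, (-x * I) ^ m / m.factorial) * I / 2 -
         (exp (x * I) - ∑ m ∈ range 7, (x * I) ^ m / m.factorial) * I / 2‖ := by
      simp [Complex.sin, field, Finset.sum_range_succ, Nat.factorial]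
      grind [I_sq, two_ne_zero]
    _ ≤ ‖exp (-x * I) - ∑ m ∈ range 7, (-x * I) ^ m / m.factorial‖ / 2 +
        ‖exp (x * I) - ∑ m ∈ range 7, (x * I) ^ m / m.factorial‖ / 2 := by
      grw [norm_sub_le]
      simp
    _ ≤ ‖-x * I‖ ^ 7 * (Nat.succ 7 * (Nat.factorial 7 * (7 : ℕ) : ℝ)⁻¹) / 2 +
        ‖x * I‖ ^ 7 * (Nat.succ 7 * (Nat.factorial 7 * (7 : ℕ) : ℝ)⁻¹) / 2 := by
      grw [exp_bound (by simpa) (by simp), exp_bound (by simpa) (by simp)]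
    _ = ‖x‖ ^ 7 / 4410 := by norm_num [Nat.factorial, mul_one_div]

theorem Real.sin_bound_pow_seven {x : ℝ} (hx : |x| ≤ 1) :
    |Real.sin x - (x - x ^ 3 / 6 + x ^ 5 / 120)| ≤ |x| ^ 7 / 4410 := by
  simpa [← Complex.ofReal_sin, ← Real.norm_eq_abs, ← Complex.norm_real] using
    Complex.sin_bound_pow_seven (x := x) (by simpa)

open Filter Topology

theorem Real.tendsto_sin_mul_div (a : ℝ) :
    Tendsto (fun h => Real.sin (a * h) / h) (𝓝[≠] 0) (𝓝 a) := by
  simpa [div_eq_inv_mul] using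
    (((hasDerivAt_id (0 : ℝ)).const_mul a).sin).tendsto_slope_zero

theorem Real.tendsto_sin_mul_sub_taylor_div_pow_five (a : ℝ) :
    Tendsto (fun h => (Real.sin (a * h) - a * h + (a * h) ^ 3 / 6) / h ^ 5) (𝓝[≠] 0)
      (𝓝 (a ^ 5 / 120)) := by
  have hsmall : ∀ᶠ h in 𝓝[≠] (0 : ℝ), |a * h| ≤ 1 := by
    refine eventually_nhdsWithin_of_eventually_nhds ?_
    have : Tendsto (fun h : ℝ => a * h) (𝓝 0) (𝓝 0) := by
      simpa using (continuous_const_mul a).tendsto 0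
    simpa using this.eventually (Metric.closedBall_mem_nhds 0 one_pos)
  have hbound : ∀ᶠ h in 𝓝[≠] (0 : ℝ),
      ‖(Real.sin (a * h) - a * h + (a * h) ^ 3 / 6) / h ^ 5 - a ^ 5 / 120‖ ≤
        |a| ^ 7 / 4410 * h ^ 2 := by
    filter_upwards [hsmall, self_mem_nhdsWithin] with h hah (hh : h ≠ 0)
    have hrem : (Real.sin (a * h) - a * h + (a * h) ^ 3 / 6) / h ^ 5 - a ^ 5 / 120 =
        (Real.sin (a * h) - (a * h - (a * h) ^ 3 / 6 + (a * h) ^ 5 / 120)) / h ^ 5 := by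
      field_simp
      ring
    rw [hrem, Real.norm_eq_abs, abs_div, div_le_iff₀ (by positivity)]
    calc _ ≤ |a * h| ^ 7 / 4410 := Real.sin_bound_pow_seven hah
      _ = |a| ^ 7 / 4410 * h ^ 2 * |h ^ 5| := by
        rw [abs_mul, abs_pow, mul_pow, show |h| ^ 7 = |h| ^ 2 * |h| ^ 5 by ring, sq_abs]
        ring
  have hsq : Tendsto (fun h : ℝ => |a| ^ 7 / 4410 * h ^ 2) (𝓝[≠] 0) (𝓝 0) := by
    refine (Continuous.tendsto' (by fun_prop) 0 0 ?_).mono_left nhdsWithin_le_nhds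
    simp
  exact tendsto_sub_nhds_zero_iff.mp (squeeze_zero_norm' hbound hsq)

theorem Complex.norm_neg_I_mul_ofReal_sub_sq (r t : ℝ) :
    ‖-Complex.I * (r : ℂ) - -Complex.I * (t : ℂ)‖ ^ 2 = (r - t) ^ 2 := by
  rw [← mul_sub, norm_mul, norm_neg, Complex.norm_I, one_mul, ← Complex.ofReal_sub,
    Complex.norm_real, Real.norm_eq_abs, sq_abs]

theorem Real.sin_mul_sin_half_sq (x : ℝ) :
    Real.sin x * Real.sin (x / 2) ^ 2 = Real.sin x / 2 - Real.sin (2 * x) / 4 := by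
  have hcos : Real.cos x = 1 - 2 * Real.sin (x / 2) ^ 2 := by
    conv_lhs => rw [← mul_div_cancel₀ x two_ne_zero, Real.cos_two_mul, Real.cos_sq']
    ring
  rw [Real.sin_two_mul, hcos]
  ring

theorem tendsto_first_correction_sub_div_pow_four (a : ℝ) :
    Tendsto (fun h => (Real.sin (a * h) / h * (1 + 2 / 3 * Real.sin (a * h / 2) ^ 2) - a) / h ^ 4)
      (𝓝[≠] 0) (𝓝 (-(a ^ 5 / 30))) := by
  have hlim := ((Real.tendsto_sin_mul_sub_taylor_div_pow_five a).const_mul (4 / 3)).sub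
    ((Real.tendsto_sin_mul_sub_taylor_div_pow_five (2 * a)).const_mul (1 / 6))
  rw [show 4 / 3 * (a ^ 5 / 120) - 1 / 6 * ((2 * a) ^ 5 / 120) = -(a ^ 5 / 30) by ring] at hlim
  refine hlim.congr' ?_
  filter_upwards [self_mem_nhdsWithin] with h (hh : h ≠ 0)
  have hsin := Real.sin_mul_sin_half_sq (a * h)
  rw [mul_comm 2 (a * h)] at hsin
  field_simp
  linear_combination (-72 : ℝ) * hsin

theorem stmt_16_general (lam p : ℝ) :
    Filter.Tendsto
      (fun h : ℝ =>
        (‖(-Complex.I * ((lam / h * Real.sin (p*h)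
              * (1 + (2/3) * Real.sin (p*h/2)^2 + (4/9) * Real.sin (p*h/2)^4) : ℝ) : ℂ))
            - (-Complex.I * ((lam * p : ℝ) : ℂ))‖ ^ 2
          - ‖(-Complex.I * ((lam / h * Real.sin (p*h)
              * (1 + (2/3) * Real.sin (p*h/2)^2) : ℝ) : ℂ))
            - (-Complex.I * ((lam * p : ℝ) : ℂ))‖ ^ 2)
          / h ^ 8)
      (nhdsWithin 0 (Set.Ioi 0))
      (nhds (-(lam^2 * p^10 * 7 / 6480))) := by
  have hsin := Real.tendsto_sin_mul_div p
  have hsinHalf : Tendsto (fun h => Real.sin (p * h / 2) / h) (𝓝[≠] 0) (𝓝 (p / 2)) := by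
    simpa only [mul_div_right_comm] using Real.tendsto_sin_mul_div (p / 2)
  have hsecond := ((hsin.const_mul lam).mul_const (4 / 9)).mul (hsinHalf.pow 4)
  have hfirst := (tendsto_first_correction_sub_div_pow_four p).const_mul lam
  have hlim := (hsecond.mul (hsecond.add (hfirst.const_mul 2))).mono_left (nhdsGT_le_nhdsNE 0)
  rw [show lam * p * (4 / 9) * (p / 2) ^ 4 * (lam * p * (4 / 9) * (p / 2) ^ 4 +
    2 * (lam * -(p ^ 5 / 30))) = -(lam ^ 2 * p ^ 10 * 7 / 6480) by ring] at hlim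
  refine hlim.congr' ?_
  filter_upwards [self_mem_nhdsWithin] with h (hh : 0 < h)
  rw [Complex.norm_neg_I_mul_ofReal_sub_sq, Complex.norm_neg_I_mul_ofReal_sub_sq]
  field_simp
  ring

theorem stmt_16 (lam p : ℝ) (hlam : lam ≠ 0) (hp : p ≠ 0) :
    Filter.Tendsto
      (fun h : ℝ =>
        (‖(-Complex.I * ((lam / h * Real.sin (p*h)
              * (1 + (2/3) * Real.sin (p*h/2)^2 + (4/9) * Real.sin (p*h/2)^4) : ℝ) : ℂ))
            - (-Complex.I * ((lam * p : ℝ) : ℂ))‖ ^ 2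
          - ‖(-Complex.I * ((lam / h * Real.sin (p*h)
              * (1 + (2/3) * Real.sin (p*h/2)^2) : ℝ) : ℂ))
            - (-Complex.I * ((lam * p : ℝ) : ℂ))‖ ^ 2)
          / h ^ 8)
      (nhdsWithin 0 (Set.Ioi 0))
      (nhds (-(lam^2 * p^10 * 7 / 6480))) :=
  stmt_16_general lam p
end

section
/- Define c_m for integers m ≥ 4 by c_m = (172·2^{2m+4} - 20·3^{2m+4} + 4^{2m+4} - 524)/(18·(2m+4)!) + μ²·(4(1 - 3^{2m+2}) + 25·2^{2m+2} + 4^{2m+1})/(18·(2m+2)!) - 4(1 + (m+1)μ²)/((2m+2)!), where μ is a real parameter. Then c_m > 0 for all m ≥ 4 and all real μ. -/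
lemma aux_43 : ∀ n : ℕ, 10 ≤ n → 17 * 3^n ≤ 4^n := by
  intro n hn
  induction n, hn using Nat.le_induction with
  | base => norm_num
  | succ n hn ih =>
    have h3 : 3 * (17 * 3^n) ≤ 3 * 4^n := Nat.mul_le_mul_left 3 ih
    have h4 : (3:ℕ) * 4^n ≤ 4 * 4^n := Nat.mul_le_mul_right _ (by norm_num)
    calc 17 * 3^(n+1) = 3 * (17 * 3^n) := by ring
      _ ≤ 4 * 4^n := le_trans h3 h4
      _ = 4^(n+1) := by ring

lemma aux_43b : ∀ n : ℕ, 12 ≤ n → 21 * 3^n ≤ 4^n := by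
  intro n hn
  induction n, hn using Nat.le_induction with
  | base => norm_num
  | succ n hn ih =>
    have h3 : 3 * (21 * 3^n) ≤ 3 * 4^n := Nat.mul_le_mul_left 3 ih
    have h4 : (3:ℕ) * 4^n ≤ 4 * 4^n := Nat.mul_le_mul_right _ (by norm_num)
    calc 21 * 3^(n+1) = 3 * (21 * 3^n) := by ring
      _ ≤ 4 * 4^n := le_trans h3 h4
      _ = 4^(n+1) := by ring

lemma aux_2n : ∀ n : ℕ, 10 ≤ n → 36 * n ≤ 2^n := by
  intro n hn
  induction n, hn using Nat.le_induction with
  | base => norm_num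
  | succ n hn ih =>
    have : 2 * (36 * n) ≤ 2 * 2^n := Nat.mul_le_mul_left 2 ih
    have h2 : 36 * (n+1) ≤ 2 * (36 * n) := by omega
    calc 36 * (n+1) ≤ 2 * 2^n := le_trans h2 this
      _ = 2^(n+1) := by ring

lemma aux_2sq : ∀ n : ℕ, 12 ≤ n → n^2 ≤ 2^n := by
  intro n hn
  induction n, hn using Nat.le_induction with
  | base => norm_num
  | succ n hn ih =>
    have : 2 * n^2 ≤ 2 * 2^n := Nat.mul_le_mul_left 2 ih
    have h2 : (n+1)^2 ≤ 2 * n^2 := by nlinarith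
    calc (n+1)^2 ≤ 2 * 2^n := le_trans h2 this
      _ = 2^(n+1) := by ring

theorem stmt_19 (m : ℕ) (hm : 4 ≤ m) (mu : ℝ) :
    0 < (172 * 2^(2*m+4) - 20 * 3^(2*m+4) + 4^(2*m+4) - 524 : ℝ)
          / (18 * (Nat.factorial (2*m+4) : ℝ))
        + mu^2 * (4 * (1 - 3^(2*m+2)) + 25 * 2^(2*m+2) + 4^(2*m+1) : ℝ)
          / (18 * (Nat.factorial (2*m+2) : ℝ))
        - 4 * (1 + (m+1) * mu^2) / (Nat.factorial (2*m+2) : ℝ) := by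
  have hF2pos : (0:ℝ) < (Nat.factorial (2*m+2) : ℝ) := by
    exact_mod_cast Nat.factorial_pos _
  have hF4pos : (0:ℝ) < (Nat.factorial (2*m+4) : ℝ) := by
    exact_mod_cast Nat.factorial_pos _
  have hF : (Nat.factorial (2*m+4) : ℝ)
      = (Nat.factorial (2*m+2) : ℝ) * (2*m+3) * (2*m+4) := by
    have : 2*m+4 = (2*m+2) + 1 + 1 := by ring
    rw [this, Nat.factorial_succ, Nat.factorial_succ]
    push_cast; ring
  -- numerators
  set N1 : ℝ := (172 * 2^(2*m+4) - 20 * 3^(2*m+4) + 4^(2*m+4) - 524 : ℝ)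
      - 72 * (2*m+3) * (2*m+4) with hN1
  set N2 : ℝ := (4 * (1 - 3^(2*m+2)) + 25 * 2^(2*m+2) + 4^(2*m+1) : ℝ)
      - 72 * (m+1) with hN2
  have hsplit : (172 * 2^(2*m+4) - 20 * 3^(2*m+4) + 4^(2*m+4) - 524 : ℝ)
          / (18 * (Nat.factorial (2*m+4) : ℝ))
        + mu^2 * (4 * (1 - 3^(2*m+2)) + 25 * 2^(2*m+2) + 4^(2*m+1) : ℝ)
          / (18 * (Nat.factorial (2*m+2) : ℝ))
        - 4 * (1 + (m+1) * mu^2) / (Nat.factorial (2*m+2) : ℝ)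
      = N1 / (18 * (Nat.factorial (2*m+4) : ℝ))
        + mu^2 * (N2 / (18 * (Nat.factorial (2*m+2) : ℝ))) := by
    rw [hN1, hN2, hF]
    have h2 : (Nat.factorial (2*m+2) : ℝ) ≠ 0 := ne_of_gt hF2pos
    field_simp
    ring
  rw [hsplit]
  -- positivity of N1
  have h43b : (21:ℝ) * 3^(2*m+4) ≤ 4^(2*m+4) := by
    exact_mod_cast aux_43b (2*m+4) (by omega)
  have h2sq : ((2*m+4:ℕ):ℝ)^2 ≤ 2^(2*m+4) := by
    exact_mod_cast aux_2sq (2*m+4) (by omega)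
  have h3big : (531441:ℝ) ≤ 3^(2*m+4) := by
    calc (531441:ℝ) = 3^12 := by norm_num
      _ ≤ 3^(2*m+4) := by
        apply pow_le_pow_right₀ (by norm_num) (by omega)
  have hmR : (4:ℝ) ≤ (m:ℝ) := by exact_mod_cast hm
  have hN1pos : 0 < N1 := by
    rw [hN1]
    push_cast at h2sq
    nlinarith [h43b, h2sq, h3big, hmR]
  -- positivity of N2
  have h43 : (17:ℝ) * 3^(2*m+2) ≤ 4^(2*m+2) := by
    exact_mod_cast aux_43 (2*m+2) (by omega)
  have h2n : (36:ℝ) * (2*m+2) ≤ 2^(2*m+2) := by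
    exact_mod_cast aux_2n (2*m+2) (by omega)
  have h4split : (4:ℝ)^(2*m+2) = 4 * 4^(2*m+1) := by
    rw [show 2*m+2 = (2*m+1)+1 by ring, pow_succ]; ring
  have h3pos : (0:ℝ) < 3^(2*m+2) := by positivity
  have hN2pos : 0 < N2 := by
    rw [hN2]
    rw [h4split] at h43
    nlinarith [h43, h2n, h3pos, hmR]
  have hmu : (0:ℝ) ≤ mu^2 := sq_nonneg mu
  have t1 : 0 < N1 / (18 * (Nat.factorial (2*m+4) : ℝ)) :=
    div_pos hN1pos (by positivity)
  have t2 : 0 ≤ mu^2 * (N2 / (18 * (Nat.factorial (2*m+2) : ℝ))) := by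
    apply mul_nonneg hmu (le_of_lt (div_pos hN2pos (by positivity)))
  linarith
end
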